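/- arXiv:2005.13427 — 3 statements merged into one kernel-verified Lean document; each statement's English description precedes it below -/
import Mathlib

section
/- Let $W: \mathbb{R}^m \to [0,\infty)$ be continuous, $\beta > 0$, and suppose $W(u) \ge \frac{c}{2}|u-a|^2$ whenever $\frac{r}{2} \le |u-a| \le r$. Let $v \in H^2([x_1,x_2];\mathbb{R}^m)$ satisfy $|v(x_1)-a| \le \epsilon < r/2$ and $|v(x_2)-a| = r$. Then $\int_{x_1}^{x_2} \left[ \frac{1}{2}|v''|^2 + \frac{\beta}{2}|v'|^2 + W(v) \right] dx \ge \sqrt{\beta c}\,(r/2)^2$. -/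
open MeasureTheory Filter Topology

/-!
Let `[y₁, y₂]` be a subinterval on which `‖v - a‖` runs from `r/2` to `r` without leaving the
annulus. There `W(v) ≥ (c/2)‖v - a‖²`, so by AM-GM and Cauchy–Schwarz the integrand dominates
`√(βc) ⟪v - a, v'⟫`, the derivative of `(√(βc)/2) ‖v - a‖²`. Integrating over `[y₁, y₂]` gives
`(√(βc)/2) (r² - (r/2)²) ≥ √(βc) (r/2)²`, and the integrand is nonnegative on the rest.
-/

open Set

open scoped RealInnerProductSpace

namespace ContinuousOn

variable {f : ℝ → ℝ} {a b y : ℝ}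

theorem exists_eq_forall_le_of_le_of_le (hab : a ≤ b) (hf : ContinuousOn f (Icc a b))
    (ha : f a ≤ y) (hb : y ≤ f b) :
    ∃ c ∈ Icc a b, f c = y ∧ ∀ x ∈ Icc a c, f x ≤ y := by
  set S := Icc a b ∩ f ⁻¹' {y}
  have hS : S.Nonempty := intermediate_value_Icc hab hf ⟨ha, hb⟩
  have hbdd : BddBelow S := ⟨a, fun x hx => hx.1.1⟩
  obtain ⟨hc, hfc⟩ : sInf S ∈ S :=
    (hf.preimage_isClosed_of_isClosed isClosed_Icc isClosed_singleton).csInf_mem hS hbdd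
  refine ⟨sInf S, hc, hfc, fun x hx => le_of_not_gt fun hyx => ?_⟩
  obtain ⟨z, hz, hfz⟩ := intermediate_value_Icc hx.1 (hf.mono (Icc_subset_Icc_right
    (hx.2.trans hc.2))) ⟨ha, hyx.le⟩
  have hzc : sInf S ≤ z := csInf_le hbdd ⟨⟨hz.1, hz.2.trans (hx.2.trans hc.2)⟩, hfz⟩
  rw [le_antisymm hx.2 (hzc.trans hz.2)] at hyx
  exact hyx.ne' hfc

theorem exists_eq_forall_ge_of_le_of_le (hab : a ≤ b) (hf : ContinuousOn f (Icc a b))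
    (ha : f a ≤ y) (hb : y ≤ f b) :
    ∃ c ∈ Icc a b, f c = y ∧ ∀ x ∈ Icc c b, y ≤ f x := by
  set S := Icc a b ∩ f ⁻¹' {y}
  have hS : S.Nonempty := intermediate_value_Icc hab hf ⟨ha, hb⟩
  have hbdd : BddAbove S := ⟨b, fun x hx => hx.1.2⟩
  obtain ⟨hc, hfc⟩ : sSup S ∈ S :=
    (hf.preimage_isClosed_of_isClosed isClosed_Icc isClosed_singleton).csSup_mem hS hbdd
  refine ⟨sSup S, hc, hfc, fun x hx => le_of_not_gt fun hxy => ?_⟩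
  obtain ⟨z, hz, hfz⟩ := intermediate_value_Icc hx.2 (hf.mono (Icc_subset_Icc_left
    (hc.1.trans hx.1))) ⟨hxy.le, hb⟩
  have hcz : z ≤ sSup S := le_csSup hbdd ⟨⟨hc.1.trans (hx.1.trans hz.1), hz.2⟩, hfz⟩
  rw [le_antisymm (hz.1.trans hcz) hx.1] at hxy
  exact hxy.ne hfc

theorem exists_subinterval_mapsTo_Icc {z : ℝ} (hab : a ≤ b) (hf : ContinuousOn f (Icc a b))
    (ha : f a ≤ y) (hyz : y ≤ z) (hb : z ≤ f b) :
    ∃ c d, a ≤ c ∧ c ≤ d ∧ d ≤ b ∧ f c = y ∧ f d = z ∧ MapsTo f (Icc c d) (Icc y z) := by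
  obtain ⟨d, hd, hfd, hle⟩ := hf.exists_eq_forall_le_of_le_of_le hab (ha.trans hyz) hb
  obtain ⟨c, hc, hfc, hge⟩ := (hf.mono (Icc_subset_Icc_right hd.2)).exists_eq_forall_ge_of_le_of_le
    hd.1 ha (hyz.trans hfd.ge)
  exact ⟨c, d, hc.1, hc.2, hd.2, hfc, hfd, fun x hx => ⟨hge x hx, hle x ⟨hc.1.trans hx.1, hx.2⟩⟩⟩

end ContinuousOn

theorem two_mul_sqrt_mul_mul_le {β c : ℝ} (hβ : 0 ≤ β) (hc : 0 ≤ c) (x y : ℝ) :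
    2 * (√(β * c) * (x * y)) ≤ β * y ^ 2 + c * x ^ 2 := by
  have := two_mul_le_add_sq (√β * y) (√c * x)
  rw [Real.sqrt_mul hβ, mul_pow, mul_pow, Real.sq_sqrt hβ, Real.sq_sqrt hc] at *
  linarith

theorem half_mul_sq_norm_sub_le_integral_of_inner_le {E : Type*} [NormedAddCommGroup E]
    [InnerProductSpace ℝ E] {v v' : ℝ → E} {φ : ℝ → ℝ} {a b κ : ℝ} (hab : a ≤ b)
    (hv : ∀ x ∈ Icc a b, HasDerivAt v (v' x) x) (hφ : IntegrableOn φ (Icc a b))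
    (hle : ∀ x ∈ Ioo a b, κ * ⟪v x, v' x⟫ ≤ φ x) :
    κ / 2 * (‖v b‖ ^ 2 - ‖v a‖ ^ 2) ≤ ∫ x in a..b, φ x := by
  have hderiv (x : ℝ) (hx : x ∈ Icc a b) :
      HasDerivAt (fun t => κ / 2 * ‖v t‖ ^ 2) (κ * ⟪v x, v' x⟫) x := by
    have := ((hv x hx).norm_sq).const_mul (κ / 2)
    rwa [← mul_assoc, div_mul_cancel₀ κ two_ne_zero] at this
  rw [mul_sub]
  exact intervalIntegral.sub_le_integral_of_hasDeriv_right_of_le hab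
    (fun x hx => (hderiv x hx).continuousAt.continuousWithinAt)
    (fun x hx => (hderiv x (Ioo_subset_Icc_self hx)).hasDerivWithinAt) hφ hle

theorem stmt3_general {m : ℕ} (W : EuclideanSpace ℝ (Fin m) → ℝ) (a : EuclideanSpace ℝ (Fin m))
    (β c r ε : ℝ) (hβ : 0 < β) (hc : 0 < c) (hr : 0 < r)
    (hWnonneg : ∀ u, 0 ≤ W u)
    (hWlow : ∀ u, r / 2 ≤ ‖u - a‖ → ‖u - a‖ ≤ r → c / 2 * ‖u - a‖ ^ 2 ≤ W u)
    (x₁ x₂ : ℝ) (hx : x₁ ≤ x₂)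
    (v v' v'' : ℝ → EuclideanSpace ℝ (Fin m))
    (hv : ∀ x ∈ Set.Icc x₁ x₂, HasDerivAt v (v' x) x)
    (hint : IntervalIntegrable
      (fun x => 1 / 2 * ‖v'' x‖ ^ 2 + β / 2 * ‖v' x‖ ^ 2 + W (v x)) volume x₁ x₂)
    (hεr : ε < r / 2)
    (hv1 : ‖v x₁ - a‖ ≤ ε) (hv2 : ‖v x₂ - a‖ = r) :
    Real.sqrt (β * c) * (r / 2) ^ 2 ≤
      ∫ x in x₁..x₂, (1 / 2 * ‖v'' x‖ ^ 2 + β / 2 * ‖v' x‖ ^ 2 + W (v x)) := by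
  set F := fun x => 1 / 2 * ‖v'' x‖ ^ 2 + β / 2 * ‖v' x‖ ^ 2 + W (v x)
  set s := √(β * c)
  have hcont : ContinuousOn (fun x => ‖v x - a‖) (Icc x₁ x₂) := fun x hx =>
    ((hv x hx).continuousAt.sub continuousAt_const).norm.continuousWithinAt
  obtain ⟨y₁, y₂, hy₁, hy₁₂, hy₂, hvy₁, hvy₂, hann⟩ := hcont.exists_subinterval_mapsTo_Icc hx
    (hv1.trans hεr.le) (by linarith) hv2.ge
  have hsub : Icc y₁ y₂ ⊆ Icc x₁ x₂ := Icc_subset_Icc hy₁ hy₂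
  have hpoint : ∀ x ∈ Icc y₁ y₂, s * ⟪v x - a, v' x⟫ ≤ F x := fun x hx => by
    have hW := hWlow (v x) (hann hx).1 (hann hx).2
    have hamgm := two_mul_sqrt_mul_mul_le hβ.le hc.le ‖v x - a‖ ‖v' x‖
    have hcs := mul_le_mul_of_nonneg_left (real_inner_le_norm (v x - a) (v' x))
      (Real.sqrt_nonneg (β * c))
    simp only [F]
    linarith [sq_nonneg ‖v'' x‖]
  have hgain : s / 2 * (r ^ 2 - (r / 2) ^ 2) ≤ ∫ x in y₁..y₂, F x := by
    rw [← hvy₁, ← hvy₂]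
    refine half_mul_sq_norm_sub_le_integral_of_inner_le hy₁₂
      (fun x hx => (hv x (hsub hx)).sub_const a) ?_ (fun x hx => hpoint x (Ioo_subset_Icc_self hx))
    exact ((intervalIntegrable_iff_integrableOn_Icc_of_le hx).1 hint).mono_set hsub
  have hmono : ∫ x in y₁..y₂, F x ≤ ∫ x in x₁..x₂, F x :=
    intervalIntegral.integral_mono_interval hy₁ hy₁₂ hy₂
      (ae_of_all _ fun x => by positivity [hWnonneg (v x)]) hint
  calc s * (r / 2) ^ 2 ≤ s / 2 * (r ^ 2 - (r / 2) ^ 2) := by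
        nlinarith [Real.sqrt_nonneg (β * c), sq_nonneg r]
    _ ≤ ∫ x in y₁..y₂, F x := hgain
    _ ≤ ∫ x in x₁..x₂, F x := hmono

/-- Lower bound on the action of a map crossing the annulus `r/2 ≤ ‖u - a‖ ≤ r`:
if `‖v(x₁) - a‖ ≤ ε < r/2` and `‖v(x₂) - a‖ = r`, then
`J_{[x₁,x₂]}(v) ≥ √(βc) (r/2)²`. -/
theorem stmt3 {m : ℕ} (W : EuclideanSpace ℝ (Fin m) → ℝ) (a : EuclideanSpace ℝ (Fin m))
    (β c r ε : ℝ) (hβ : 0 < β) (hc : 0 < c) (hr : 0 < r)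
    (hWcont : Continuous W) (hWnonneg : ∀ u, 0 ≤ W u)
    (hWlow : ∀ u, r / 2 ≤ ‖u - a‖ → ‖u - a‖ ≤ r → c / 2 * ‖u - a‖ ^ 2 ≤ W u)
    (x₁ x₂ : ℝ) (hx : x₁ ≤ x₂)
    (v v' v'' : ℝ → EuclideanSpace ℝ (Fin m))
    (hv : ∀ x ∈ Set.Icc x₁ x₂, HasDerivAt v (v' x) x)
    (hv' : ∀ x ∈ Set.Icc x₁ x₂, HasDerivAt v' (v'' x) x)
    (hint : IntervalIntegrable
      (fun x => 1 / 2 * ‖v'' x‖ ^ 2 + β / 2 * ‖v' x‖ ^ 2 + W (v x)) volume x₁ x₂)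
    (hε : 0 ≤ ε) (hεr : ε < r / 2)
    (hv1 : ‖v x₁ - a‖ ≤ ε) (hv2 : ‖v x₂ - a‖ = r) :
    Real.sqrt (β * c) * (r / 2) ^ 2 ≤
      ∫ x in x₁..x₂, (1 / 2 * ‖v'' x‖ ^ 2 + β / 2 * ‖v' x‖ ^ 2 + W (v x)) :=
  stmt3_general W a β c r ε hβ hc hr hWnonneg hWlow x₁ x₂ hx v v' v'' hv hint hεr hv1 hv2
end

section
/- Let $H$ be a Hilbert space, $F \subset H$ a set such that every bounded sequence in $F$ has a subsequence converging in $H$ to an element of $F$, and suppose for each $v$ the distance $d(v,F)$ is attained. Let $v_k \rightharpoonup v$ weakly in $H$, and let $e_k \in F$ with $\|v_k - e_k\| = d(v_k, F)$ and $e_k \to e$ strongly in $H$. Then $\|v - e\| = d(v, F)$. -/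
open MeasureTheory Filter Topology

theorem Metric.infDist_eq_dist_of_mem_closure {α : Type*} [PseudoMetricSpace α] {s : Set α}
    {x y : α} (hy : y ∈ closure s) (hmin : ∀ z ∈ s, dist x y ≤ dist x z) :
    Metric.infDist x s = dist x y := by
  refine le_antisymm ?_ ?_
  · simpa only [Metric.infDist_closure] using Metric.infDist_le_dist_of_mem hy
  · exact (Metric.le_infDist (closure_nonempty_iff.mp ⟨y, hy⟩)).mpr hmin

section WeakConvergence

variable {H : Type*} [NormedAddCommGroup H] [InnerProductSpace ℝ H]

/-- Uniform boundedness principle applied to the functionals `⟪u k, ·⟫`. -/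
theorem exists_norm_le_of_tendsto_inner [CompleteSpace H] {u : ℕ → H} {v : H}
    (hweak : ∀ y, Tendsto (fun k => inner ℝ (u k) y) atTop (𝓝 (inner ℝ v y))) :
    ∃ C, ∀ k, ‖u k‖ ≤ C := by
  obtain ⟨C, hC⟩ := banach_steinhaus (g := fun k => innerSL ℝ (u k)) fun y => by
    obtain ⟨M, hM⟩ := (hweak y).norm.bddAbove_range
    exact ⟨M, fun k => hM ⟨k, rfl⟩⟩
  exact ⟨C, fun k => by simpa only [innerSL_apply_norm] using hC k⟩

theorem tendsto_inner_of_weak_of_tendsto {ι : Type*} {l : Filter ι} {u w : ι → H} {v e : H}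
    {C : ℝ} (hC : ∀ i, ‖u i‖ ≤ C)
    (hweak : Tendsto (fun i => inner ℝ (u i) e) l (𝓝 (inner ℝ v e)))
    (hw : Tendsto w l (𝓝 e)) :
    Tendsto (fun i => inner ℝ (u i) (w i)) l (𝓝 (inner ℝ v e)) := by
  have hsmall : Tendsto (fun i => inner ℝ (u i) (w i - e)) l (𝓝 0) := by
    refine squeeze_zero_norm (fun i => ?_)
      (by simpa using (tendsto_sub_nhds_zero_iff.mpr hw).norm.const_mul C)
    calc ‖inner ℝ (u i) (w i - e)‖ ≤ ‖u i‖ * ‖w i - e‖ := norm_inner_le_norm _ _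
      _ ≤ C * ‖w i - e‖ := mul_le_mul_of_nonneg_right (hC i) (norm_nonneg _)
  simpa only [← inner_add_right, sub_add_cancel, zero_add] using hsmall.add hweak

/-- Expanding `‖u - f‖² = ‖u‖² - 2⟪u, f⟫ + ‖f‖²`, the comparison `‖u i - w i‖ ≤ ‖u i - f‖` only
involves `‖w i‖`, `⟪u i, w i⟫` and `⟪u i, f⟫`, all of which converge. -/
theorem norm_sub_le_of_tendsto {ι : Type*} {l : Filter ι} [l.NeBot] {u w : ι → H} {v e f : H}
    (hle : ∀ i, ‖u i - w i‖ ≤ ‖u i - f‖)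
    (huw : Tendsto (fun i => inner ℝ (u i) (w i)) l (𝓝 (inner ℝ v e)))
    (huf : Tendsto (fun i => inner ℝ (u i) f) l (𝓝 (inner ℝ v f)))
    (hw : Tendsto w l (𝓝 e)) :
    ‖v - e‖ ≤ ‖v - f‖ := by
  have hexpand : ∀ i, ‖w i‖ ^ 2 - 2 * inner ℝ (u i) (w i) ≤ ‖f‖ ^ 2 - 2 * inner ℝ (u i) f := by
    intro i
    have := pow_le_pow_left₀ (norm_nonneg _) (hle i) 2
    rw [norm_sub_sq_real, norm_sub_sq_real] at this
    linarith
  have hlim : ‖e‖ ^ 2 - 2 * inner ℝ v e ≤ ‖f‖ ^ 2 - 2 * inner ℝ v f :=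
    le_of_tendsto_of_tendsto' ((hw.norm.pow 2).sub (huw.const_mul 2))
      (tendsto_const_nhds.sub (huf.const_mul 2)) hexpand
  refine (pow_le_pow_iff_left₀ (norm_nonneg _) (norm_nonneg _) two_ne_zero).mp ?_
  rw [norm_sub_sq_real, norm_sub_sq_real]
  linarith

end WeakConvergence

theorem stmt10_general {H : Type*} [NormedAddCommGroup H] [InnerProductSpace ℝ H] [CompleteSpace H]
    (F : Set H)
    (v : H) (vk : ℕ → H)
    (hweak : ∀ y : H, Tendsto (fun k => (inner ℝ (vk k) y : ℝ)) atTop (𝓝 (inner ℝ v y : ℝ)))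
    (ek : ℕ → H) (hek : ∀ k, ek k ∈ F)
    (hproj : ∀ k, ‖vk k - ek k‖ = Metric.infDist (vk k) F)
    (e : H) (he : Tendsto ek atTop (𝓝 e)) :
    ‖v - e‖ = Metric.infDist v F := by
  obtain ⟨C, hC⟩ := exists_norm_le_of_tendsto_inner hweak
  have hinner := tendsto_inner_of_weak_of_tendsto hC (hweak e) he
  have hnearest : ∀ k, ∀ f ∈ F, ‖vk k - ek k‖ ≤ ‖vk k - f‖ := fun k f hf => by
    simpa only [hproj, dist_eq_norm] using Metric.infDist_le_dist_of_mem (x := vk k) hf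
  have hmin : ∀ f ∈ F, dist v e ≤ dist v f := fun f hf => by
    simpa only [dist_eq_norm] using
      norm_sub_le_of_tendsto (fun k => hnearest k f hf) hinner (hweak f) he
  rw [← dist_eq_norm,
    Metric.infDist_eq_dist_of_mem_closure (mem_closure_of_tendsto he (.of_forall hek)) hmin]

/-- Weak-strong limit of nearest points: if `v_k ⇀ v` weakly, `e_k ∈ F` realizes
`d(v_k, F)`, and `e_k → e` strongly, then `e` realizes `d(v, F)`. -/
theorem stmt10 {H : Type*} [NormedAddCommGroup H] [InnerProductSpace ℝ H] [CompleteSpace H]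
    (F : Set H)
    (hcpt : ∀ u : ℕ → H, (∀ k, u k ∈ F) → Bornology.IsBounded (Set.range u) →
      ∃ (e₀ : H) (φ : ℕ → ℕ), e₀ ∈ F ∧ StrictMono φ ∧ Tendsto (u ∘ φ) atTop (𝓝 e₀))
    (hattain : ∀ v : H, ∃ f ∈ F, ‖v - f‖ = Metric.infDist v F)
    (v : H) (vk : ℕ → H)
    (hweak : ∀ y : H, Tendsto (fun k => (inner ℝ (vk k) y : ℝ)) atTop (𝓝 (inner ℝ v y : ℝ)))
    (ek : ℕ → H) (hek : ∀ k, ek k ∈ F)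
    (hproj : ∀ k, ‖vk k - ek k‖ = Metric.infDist (vk k) F)
    (e : H) (he : Tendsto ek atTop (𝓝 e)) :
    ‖v - e‖ = Metric.infDist v F :=
  stmt10_general F v vk hweak ek hek hproj e he
end

section
/- With $z$ as in the piecewise construction (context), assume $|v_0 - a| \le \epsilon/8$ and $|v_1| \le \epsilon/4$ with $0 < \epsilon < r/2$, and assume $W(u) \le \frac{\mu}{2}|u-a|^2$ for $|u-a| \le r$. Then for all $x \le \lambda$: $|z(x)-a| \le \epsilon/4$, $|z'(x)| \le \epsilon$, $|z''(x)| \le 2\epsilon$, and $\int_{-\infty}^{\lambda} [\frac{1}{2}|z''|^2 + \frac{\beta}{2}|z'|^2 + W(z)]\,dx \le (4 + \beta + \mu)\epsilon^2$. -/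
/-!
On `[λ-1, λ]` the map is a quadratic in `x - λ ∈ [-1, 0]`, and on `[λ-2, λ-1]` it moves from
`φ₀ = v₀ - v₁/2` to `a` along the quartic `φ₀ + (1 - (1-t²)²)(a - φ₀)` with `t = x - λ + 1`.
All polynomial coefficients are bounded on these unit intervals, so `z - a`, `z'` and `z''` are
bounded by fixed multiples of `δ = ‖v₀ - a‖ + ‖v₁‖/2 ≤ ε/4`. The integrand therefore vanishes on
`(-∞, λ-2]` (where `z ≡ a` and `W(a) = 0`) and is at most `(2 + β/2 + μ/2) ε²` on the remaining
interval of length `2`.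
-/

open MeasureTheory Set

theorem setIntegral_Iic_le_of_eq_zero_of_norm_le {f : ℝ → ℝ} {a b C : ℝ} (hab : a ≤ b)
    (h0 : ∀ x ≤ a, f x = 0) (hC : ∀ x ∈ Ioc a b, ‖f x‖ ≤ C) :
    ∫ x in Iic b, f x ≤ C * (b - a) := by
  have hsupp : ∀ x ∈ Iic b \ Ioc a b, f x = 0 := by
    rw [Iic_sdiff_Ioc_self_of_le hab]
    exact h0
  rw [setIntegral_eq_of_subset_of_forall_sdiff_eq_zero measurableSet_Iic Ioc_subset_Iic_self hsupp]
  calc ∫ x in Ioc a b, f x ≤ ‖∫ x in Ioc a b, f x‖ := Real.le_norm_self _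
    _ ≤ C * volume.real (Ioc a b) := norm_setIntegral_le_of_norm_le_const measure_Ioc_lt_top hC
    _ = C * (b - a) := by rw [Real.volume_real_Ioc_of_le hab]

section Transition

variable {E : Type*} [NormedAddCommGroup E] [NormedSpace ℝ E]

/-- The paper's `z`; `transitionDeriv` and `transitionDeriv2` are the given formulas for `z'`, `z''`. -/
noncomputable def transition (a v₀ v₁ : E) (lam : ℝ) : ℝ → E := fun x =>
  if x ≤ lam - 2 then a
  else if x ≤ lam - 1 then
    (v₀ - (1 / 2 : ℝ) • v₁) +
      (2 * (x - lam + 1) ^ 2 - (x - lam + 1) ^ 4) • (a - (v₀ - (1 / 2 : ℝ) • v₁))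
  else v₀ + ((x - lam) + (x - lam) ^ 2 / 2) • v₁

noncomputable def transitionDeriv (a v₀ v₁ : E) (lam : ℝ) : ℝ → E := fun x =>
  if x ≤ lam - 2 then 0
  else if x ≤ lam - 1 then
    (4 * (x - lam + 1) - 4 * (x - lam + 1) ^ 3) • (a - (v₀ - (1 / 2 : ℝ) • v₁))
  else (1 + (x - lam)) • v₁

noncomputable def transitionDeriv2 (a v₀ v₁ : E) (lam : ℝ) : ℝ → E := fun x =>
  if x ≤ lam - 2 then 0
  else if x ≤ lam - 1 then
    (4 - 12 * (x - lam + 1) ^ 2) • (a - (v₀ - (1 / 2 : ℝ) • v₁))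
  else v₁

theorem norm_smul_le_of_abs_le {c K δ : ℝ} {v : E} (hc : |c| ≤ K) (hv : ‖v‖ ≤ δ) :
    ‖c • v‖ ≤ K * δ := by
  rw [norm_smul, Real.norm_eq_abs]
  exact mul_le_mul hc hv (norm_nonneg v) ((abs_nonneg c).trans hc)

theorem norm_sub_half_smul_sub_le (a v₀ v₁ : E) :
    ‖a - (v₀ - (1 / 2 : ℝ) • v₁)‖ ≤ ‖v₀ - a‖ + ‖v₁‖ / 2 := by
  have h : a - (v₀ - (1 / 2 : ℝ) • v₁) = -(v₀ - a) + (1 / 2 : ℝ) • v₁ := by module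
  calc ‖a - (v₀ - (1 / 2 : ℝ) • v₁)‖ ≤ ‖v₀ - a‖ + ‖(1 / 2 : ℝ) • v₁‖ := by
        rw [h, ← norm_neg (v₀ - a)]
        exact norm_add_le _ _
    _ = ‖v₀ - a‖ + ‖v₁‖ / 2 := by rw [norm_smul]; norm_num; ring

variable (a v₀ v₁ : E) {lam x : ℝ}

theorem transition_of_le (hx : x ≤ lam - 2) : transition a v₀ v₁ lam x = a := if_pos hx

theorem transitionDeriv_of_le (hx : x ≤ lam - 2) : transitionDeriv a v₀ v₁ lam x = 0 := if_pos hx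

theorem transitionDeriv2_of_le (hx : x ≤ lam - 2) : transitionDeriv2 a v₀ v₁ lam x = 0 :=
  if_pos hx

theorem norm_transition_sub_le (hx : x ≤ lam) :
    ‖transition a v₀ v₁ lam x - a‖ ≤ ‖v₀ - a‖ + ‖v₁‖ / 2 := by
  have hδ := norm_sub_half_smul_sub_le a v₀ v₁
  unfold transition
  split_ifs with h₂ h₁
  · simp only [sub_self, norm_zero]
    positivity
  · set t := x - lam + 1
    have key : v₀ - (1 / 2 : ℝ) • v₁ + (2 * t ^ 2 - t ^ 4) • (a - (v₀ - (1 / 2 : ℝ) • v₁)) - a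
        = (-(1 - t ^ 2) ^ 2) • (a - (v₀ - (1 / 2 : ℝ) • v₁)) := by module
    have ht : 0 ≤ 1 - t ^ 2 ∧ 1 - t ^ 2 ≤ 1 := ⟨by nlinarith, by nlinarith⟩
    rw [key, ← one_mul (‖v₀ - a‖ + _)]
    refine norm_smul_le_of_abs_le ?_ hδ
    rw [abs_neg, abs_of_nonneg (sq_nonneg _)]
    nlinarith
  · have key : v₀ + ((x - lam) + (x - lam) ^ 2 / 2) • v₁ - a
        = (v₀ - a) + ((x - lam) + (x - lam) ^ 2 / 2) • v₁ := by abel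
    rw [key]
    refine (norm_add_le _ _).trans (add_le_add le_rfl ?_)
    refine (norm_smul_le_of_abs_le (K := 1 / 2) ?_ le_rfl).trans_eq (by ring)
    rw [abs_le]
    constructor <;> nlinarith

theorem norm_transitionDeriv_le (hx : x ≤ lam) :
    ‖transitionDeriv a v₀ v₁ lam x‖ ≤ 4 * (‖v₀ - a‖ + ‖v₁‖ / 2) := by
  have hδ := norm_sub_half_smul_sub_le a v₀ v₁
  unfold transitionDeriv
  split_ifs with h₂ h₁
  · simp only [norm_zero]
    positivity
  · set t := x - lam + 1
    refine norm_smul_le_of_abs_le ?_ hδ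
    have ht : 0 ≤ -t ∧ -t ≤ 1 := ⟨by linarith, by linarith⟩
    have ht' : 0 ≤ 1 - t ^ 2 ∧ 1 - t ^ 2 ≤ 1 := ⟨by nlinarith, by nlinarith⟩
    rw [show 4 * t - 4 * t ^ 3 = -(4 * (-t) * (1 - t ^ 2)) by ring, abs_neg,
      abs_of_nonneg (mul_nonneg (mul_nonneg zero_le_four ht.1) ht'.1)]
    nlinarith
  · have hs : |1 + (x - lam)| ≤ 1 := abs_le.mpr ⟨by linarith, by linarith⟩
    refine (norm_smul_le_of_abs_le hs le_rfl).trans ?_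
    linarith [norm_nonneg (v₀ - a), norm_nonneg v₁]

theorem norm_transitionDeriv2_le (hx : x ≤ lam) :
    ‖transitionDeriv2 a v₀ v₁ lam x‖ ≤ 8 * (‖v₀ - a‖ + ‖v₁‖ / 2) := by
  have hδ := norm_sub_half_smul_sub_le a v₀ v₁
  unfold transitionDeriv2
  split_ifs with h₂ h₁
  · simp only [norm_zero]
    positivity
  · refine norm_smul_le_of_abs_le ?_ hδ
    rw [abs_le]
    constructor <;> nlinarith
  · linarith [norm_nonneg (v₀ - a), norm_nonneg v₁]

end Transition

theorem stmt13_general {m : ℕ} (W : EuclideanSpace ℝ (Fin m) → ℝ)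
    (a v₀ v₁ : EuclideanSpace ℝ (Fin m)) (lam β μ r ε : ℝ)
    (hβ : 0 < β) (hμ : 0 < μ) (hr : 0 < r) (hε : 0 < ε) (hεr : ε < r / 2)
    (hWnonneg : ∀ u, 0 ≤ W u)
    (hWup : ∀ u, ‖u - a‖ ≤ r → W u ≤ μ / 2 * ‖u - a‖ ^ 2)
    (hv₀ : ‖v₀ - a‖ ≤ ε / 8) (hv₁ : ‖v₁‖ ≤ ε / 4)
    (z z' z'' : ℝ → EuclideanSpace ℝ (Fin m))
    (hz : z = fun x =>
      if x ≤ lam - 2 then a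
      else if x ≤ lam - 1 then
        (v₀ - (1 / 2 : ℝ) • v₁) +
          (2 * (x - lam + 1) ^ 2 - (x - lam + 1) ^ 4) • (a - (v₀ - (1 / 2 : ℝ) • v₁))
      else v₀ + ((x - lam) + (x - lam) ^ 2 / 2) • v₁)
    (hz' : z' = fun x =>
      if x ≤ lam - 2 then 0
      else if x ≤ lam - 1 then
        (4 * (x - lam + 1) - 4 * (x - lam + 1) ^ 3) • (a - (v₀ - (1 / 2 : ℝ) • v₁))
      else (1 + (x - lam)) • v₁)
    (hz'' : z'' = fun x =>
      if x ≤ lam - 2 then 0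
      else if x ≤ lam - 1 then
        (4 - 12 * (x - lam + 1) ^ 2) • (a - (v₀ - (1 / 2 : ℝ) • v₁))
      else v₁) :
    (∀ x ≤ lam, ‖z x - a‖ ≤ ε / 4 ∧ ‖z' x‖ ≤ ε ∧ ‖z'' x‖ ≤ 2 * ε) ∧
      ∫ x in Set.Iic lam, (1 / 2 * ‖z'' x‖ ^ 2 + β / 2 * ‖z' x‖ ^ 2 + W (z x)) ≤
        (4 + β + μ) * ε ^ 2 := by
  replace hz : z = transition a v₀ v₁ lam := hz
  replace hz' : z' = transitionDeriv a v₀ v₁ lam := hz'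
  replace hz'' : z'' = transitionDeriv2 a v₀ v₁ lam := hz''
  have hδ : ‖v₀ - a‖ + ‖v₁‖ / 2 ≤ ε / 4 := by linarith
  have hbounds : ∀ x ≤ lam, ‖z x - a‖ ≤ ε / 4 ∧ ‖z' x‖ ≤ ε ∧ ‖z'' x‖ ≤ 2 * ε := by
    intro x hx
    rw [hz, hz', hz'']
    exact ⟨(norm_transition_sub_le a v₀ v₁ hx).trans hδ,
      by linarith [norm_transitionDeriv_le a v₀ v₁ hx],
      by linarith [norm_transitionDeriv2_le a v₀ v₁ hx]⟩
  have hWa : W a = 0 := le_antisymm (by simpa using hWup a (by simpa using hr.le)) (hWnonneg a)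
  have hintegrand : ∀ x ∈ Ioc (lam - 2) lam,
      ‖1 / 2 * ‖z'' x‖ ^ 2 + β / 2 * ‖z' x‖ ^ 2 + W (z x)‖ ≤ (2 + β / 2 + μ / 2) * ε ^ 2 := by
    intro x hx
    obtain ⟨hz₀, hz₁, hz₂⟩ := hbounds x hx.2
    have hW := hWup (z x) (by linarith)
    rw [Real.norm_of_nonneg (add_nonneg (by positivity) (hWnonneg _))]
    have h₀ : ‖z x - a‖ ^ 2 ≤ ε ^ 2 := pow_le_pow_left₀ (norm_nonneg _) (by linarith) 2
    have h₁ : ‖z' x‖ ^ 2 ≤ ε ^ 2 := pow_le_pow_left₀ (norm_nonneg _) hz₁ 2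
    have h₂ : ‖z'' x‖ ^ 2 ≤ (2 * ε) ^ 2 := pow_le_pow_left₀ (norm_nonneg _) hz₂ 2
    nlinarith [mul_le_mul_of_nonneg_left h₀ hμ.le, mul_le_mul_of_nonneg_left h₁ hβ.le]
  refine ⟨hbounds, ?_⟩
  calc _ ≤ (2 + β / 2 + μ / 2) * ε ^ 2 * (lam - (lam - 2)) :=
        setIntegral_Iic_le_of_eq_zero_of_norm_le (by linarith)
          (fun x hx => by simp [hz, hz', hz'', transition_of_le, transitionDeriv_of_le, transitionDeriv2_of_le,
            hx, hWa]) hintegrand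
    _ = (4 + β + μ) * ε ^ 2 := by ring

/-- Estimates on the comparison map `z`: if `‖v₀ - a‖ ≤ ε/8`, `‖v₁‖ ≤ ε/4`,
`0 < ε < r/2` and `W(u) ≤ (μ/2)‖u-a‖²` on `‖u-a‖ ≤ r`, then
`‖z-a‖ ≤ ε/4`, `‖z'‖ ≤ ε`, `‖z''‖ ≤ 2ε` on `(-∞,λ]`, and
`∫_{-∞}^{λ} [½|z''|² + β/2|z'|² + W(z)] ≤ (4+β+μ)ε²`. -/
theorem stmt13 {m : ℕ} (W : EuclideanSpace ℝ (Fin m) → ℝ)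
    (a v₀ v₁ : EuclideanSpace ℝ (Fin m)) (lam β μ r ε : ℝ)
    (hβ : 0 < β) (hμ : 0 < μ) (hr : 0 < r) (hε : 0 < ε) (hεr : ε < r / 2)
    (hWcont : Continuous W) (hWnonneg : ∀ u, 0 ≤ W u)
    (hWup : ∀ u, ‖u - a‖ ≤ r → W u ≤ μ / 2 * ‖u - a‖ ^ 2)
    (hv₀ : ‖v₀ - a‖ ≤ ε / 8) (hv₁ : ‖v₁‖ ≤ ε / 4)
    (z z' z'' : ℝ → EuclideanSpace ℝ (Fin m))
    (hz : z = fun x =>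
      if x ≤ lam - 2 then a
      else if x ≤ lam - 1 then
        (v₀ - (1 / 2 : ℝ) • v₁) +
          (2 * (x - lam + 1) ^ 2 - (x - lam + 1) ^ 4) • (a - (v₀ - (1 / 2 : ℝ) • v₁))
      else v₀ + ((x - lam) + (x - lam) ^ 2 / 2) • v₁)
    (hz' : z' = fun x =>
      if x ≤ lam - 2 then 0
      else if x ≤ lam - 1 then
        (4 * (x - lam + 1) - 4 * (x - lam + 1) ^ 3) • (a - (v₀ - (1 / 2 : ℝ) • v₁))
      else (1 + (x - lam)) • v₁)
    (hz'' : z'' = fun x =>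
      if x ≤ lam - 2 then 0
      else if x ≤ lam - 1 then
        (4 - 12 * (x - lam + 1) ^ 2) • (a - (v₀ - (1 / 2 : ℝ) • v₁))
      else v₁) :
    (∀ x ≤ lam, ‖z x - a‖ ≤ ε / 4 ∧ ‖z' x‖ ≤ ε ∧ ‖z'' x‖ ≤ 2 * ε) ∧
      ∫ x in Set.Iic lam, (1 / 2 * ‖z'' x‖ ^ 2 + β / 2 * ‖z' x‖ ^ 2 + W (z x)) ≤
        (4 + β + μ) * ε ^ 2 :=
  stmt13_general W a v₀ v₁ lam β μ r ε hβ hμ hr hε hεr hWnonneg hWup hv₀ hv₁ z z' z'' hz hz' hz''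
end
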